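/- Under the prefix-sampling scheme where a random walk ω^{(i)} out of node v_i satisfies Pr(ω is a prefix subwalk of ω^{(i)}) = p(ω) for every finite walk ω starting at v_i, the projection vector ψ(ω^{(i)})_q := ∑_{ω ∈ Ω_{iq}} (ω̃(ω) f_{len(ω)} / p(ω)) 𝟙(ω prefix subwalk of ω^{(i)}) satisfies 𝔼[ψ(ω^{(i)})_q] = ∑_{k=0}^∞ f_k (W^k)_{iq}, assuming absolute summability of the series ∑_{ω ∈ Ω_{iq}} |ω̃(ω) f_{len(ω)}|. -/

import Mathlib

/-!
Each summand of `ψ` is an importance-weighted indicator: the event that `ω` is a prefix has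
probability `p(ω)`, so `ω̃(ω) f_{len ω} / p(ω) · 𝟙` has expectation `ω̃(ω) f_{len ω}`, and its
`L¹` norm is `|ω̃(ω) f_{len ω}|`. Absolute summability therefore lets expectation and sum be
exchanged, and the resulting absolutely convergent series over all walks is regrouped by length.
-/

open MeasureTheory

theorem norm_mul_indicator_one {X : Type*} {s : Set X} (a : ℝ) (x : X) :
    ‖a * s.indicator (fun _ => (1 : ℝ)) x‖ = |a| * s.indicator (fun _ => (1 : ℝ)) x := by
  rw [norm_mul, Real.norm_eq_abs,
    Real.norm_of_nonneg (Set.indicator_nonneg (fun _ _ => zero_le_one) x)]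

section ImportanceWeighting

variable {X : Type*} [MeasurableSpace X] {μ : Measure X} {s : Set X} {p : ℝ}

theorem integrable_const_mul_indicator_one (hs : MeasurableSet s) (hμs : μ s = ENNReal.ofReal p)
    (c : ℝ) : Integrable (fun x => c * s.indicator (fun _ => (1 : ℝ)) x) μ :=
  ((integrable_indicator_iff hs).2 (integrableOn_const (hμs ▸ ENNReal.ofReal_ne_top))).const_mul c

theorem integral_div_mul_indicator_one (hs : MeasurableSet s) (hp : 0 < p)
    (hμs : μ s = ENNReal.ofReal p) (c : ℝ) :
    ∫ x, c / p * s.indicator (fun _ => (1 : ℝ)) x ∂μ = c := by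
  rw [integral_const_mul, integral_indicator_const 1 hs, measureReal_def, hμs,
    ENNReal.toReal_ofReal hp.le, smul_eq_mul, mul_one, div_mul_cancel₀ _ hp.ne']

theorem integral_tsum_div_mul_indicator_one {ι : Type*} [Countable ι] {s : ι → Set X}
    (hs : ∀ i, MeasurableSet (s i)) {p : ι → ℝ} (hp : ∀ i, 0 < p i)
    (hμs : ∀ i, μ (s i) = ENNReal.ofReal (p i)) {c : ι → ℝ} (hc : Summable fun i => |c i|) :
    ∫ x, ∑' i, c i / p i * (s i).indicator (fun _ => (1 : ℝ)) x ∂μ = ∑' i, c i := by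
  have hnorm : ∀ i, ∫ x, ‖c i / p i * (s i).indicator (fun _ => (1 : ℝ)) x‖ ∂μ = |c i| := by
    intro i
    simp_rw [norm_mul_indicator_one, abs_div, abs_of_pos (hp i)]
    exact integral_div_mul_indicator_one (hs i) (hp i) (hμs i) _
  rw [← integral_tsum_of_summable_integral_norm
    (fun i => integrable_const_mul_indicator_one (hs i) (hμs i) _) (by simpa only [hnorm] using hc)]
  exact tsum_congr fun i => integral_div_mul_indicator_one (hs i) (hp i) (hμs i) _

end ImportanceWeighting

theorem stmt_13_general {X : Type*} [MeasurableSpace X] (μ : Measure X)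
    (Walk : Type*) [Countable Walk]
    (len : Walk → ℕ) (wt : Walk → ℝ) (pwalk : Walk → ℝ) (hpos : ∀ ω, 0 < pwalk ω)
    (Pref : Walk → Set X) (hmeas : ∀ ω, MeasurableSet (Pref ω))
    (hprob : ∀ ω, μ (Pref ω) = ENNReal.ofReal (pwalk ω))
    (f : ℕ → ℝ)
    (habs : Summable fun ω : Walk => |wt ω * f (len ω)|) :
    ∫ x, (∑' ω : Walk, (wt ω * f (len ω) / pwalk ω) * (Pref ω).indicator (fun _ => (1 : ℝ)) x) ∂μ =
      ∑' k : ℕ, f k * ∑' ω : {ω : Walk // len ω = k}, wt ω.1 := by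
  rw [integral_tsum_div_mul_indicator_one hmeas hpos hprob habs,
    ← (habs.of_abs.hasSum.tsum_fiberwise len).tsum_eq]
  refine tsum_congr fun k => ?_
  rw [← tsum_mul_left]
  exact tsum_congr fun ω => by rw [ω.2, mul_comm]

/-- Unbiasedness of the GRF projection vector: if each finite walk `ω ∈ Ω_{iq}` is a
prefix of the sampled random walk with probability `p(ω) > 0`, then the expectation of
`ψ(ω^{(i)})_q = ∑_{ω} (ω̃(ω) f_{len ω} / p(ω)) 𝟙(ω prefix)` equals
`∑_k f k (W^k)_{iq}`, where `(W^k)_{iq} = ∑_{len ω = k} ω̃(ω)`. -/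
theorem stmt_13 {X : Type*} [MeasurableSpace X] (μ : Measure X) [IsProbabilityMeasure μ]
    (Walk : Type*) [Countable Walk]
    (len : Walk → ℕ) (wt : Walk → ℝ) (pwalk : Walk → ℝ) (hpos : ∀ ω, 0 < pwalk ω)
    (Pref : Walk → Set X) (hmeas : ∀ ω, MeasurableSet (Pref ω))
    (hprob : ∀ ω, μ (Pref ω) = ENNReal.ofReal (pwalk ω))
    (f : ℕ → ℝ)
    (habs : Summable fun ω : Walk => |wt ω * f (len ω)|)
    (hWk : ∀ k : ℕ, Summable fun ω : {ω : Walk // len ω = k} => wt ω.1) :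
    ∫ x, (∑' ω : Walk, (wt ω * f (len ω) / pwalk ω) * (Pref ω).indicator (fun _ => (1 : ℝ)) x) ∂μ =
      ∑' k : ℕ, f k * ∑' ω : {ω : Walk // len ω = k}, wt ω.1 :=
  stmt_13_general μ Walk len wt pwalk hpos Pref hmeas hprob f habs
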